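/- If a continuous map p : E → B has the unique path homotopically lifting property (uphl), then p has the unique lifting property with respect to path connected spaces: for every path connected topological space X, any two continuous maps f, g : X → E with p ∘ f = p ∘ g that agree at some point x₀ ∈ X are equal. -/
import Mathlib


universe u

open scoped unitInterval

/-- `p` has the unique path homotopically lifting property (uphl). -/
def Uphl {E B : Type*} [TopologicalSpace E] [TopologicalSpace B] (p : C(E, B)) : Prop :=
  ∀ α β : C(unitInterval, E), α 0 = β 0 →
    (p.comp α).HomotopicRel (p.comp β) {0, 1} →
    α.HomotopicRel β {0, 1}

theorem uphl_unique_lifting_of_pathConnected {E B : Type*} [TopologicalSpace E]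
    [TopologicalSpace B] (p : C(E, B)) (h : Uphl p) :
    ∀ (X : Type u) [TopologicalSpace X] [PathConnectedSpace X] (f g : C(X, E)),
      p.comp f = p.comp g → (∃ x₀ : X, f x₀ = g x₀) → f = g := by
  intro X _ _ f g hpfg ⟨x₀, hx₀⟩
  ext x
  obtain ⟨γ⟩ := PathConnectedSpace.joined x₀ x
  set α : C(unitInterval, E) := f.comp γ.toContinuousMap with hα
  set β : C(unitInterval, E) := g.comp γ.toContinuousMap with hβ
  have h0 : α 0 = β 0 := by simp [hα, hβ, hx₀]
  have hcomp : p.comp α = p.comp β := by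
    rw [hα, hβ, ← ContinuousMap.comp_assoc, ← ContinuousMap.comp_assoc, hpfg]
  have hrel : α.HomotopicRel β {0, 1} := h α β h0 (hcomp ▸ ContinuousMap.HomotopicRel.refl _)
  obtain ⟨F⟩ := hrel
  have := F.fst_eq_snd (x := (1 : unitInterval)) (by simp)
  simpa [hα, hβ] using this
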